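/- Let (P, Q, R) satisfy Ramanujan's differential equations and let T = R + √(R²−Q³). Then the triple p₀ = P + (1/2)T^{1/3} + (1/2)Q/T^{1/3}, q₀ = (3/2)Q + (5/4)T^{2/3} + (5/4)Q²/T^{2/3}, r₀ = (11/4)R + (21/8)QT^{1/3} + (21/8)Q²/T^{1/3} also satisfies Ramanujan's differential equations p₀' = (1/6)(p₀² − q₀), q₀' = (2/3)(p₀q₀ − r₀), r₀' = p₀r₀ − q₀². -/

import Mathlib

/-!
Put `u = T^{1/3}` and `v = Q / u`. Then `u³` and `v³` are the two roots `R ± √(R² - Q³)` of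
`X² - 2RX + Q³`, so `uv = Q` and `u³ + v³ = 2R`, and Ramanujan's equations become
`P' = (P² - uv)/6`, `u' = (Pu - v²)/3`, `v' = (Pv - u²)/3`. In these coordinates `p₀, q₀, r₀`
are polynomials in `P, u, v`, and the claim is a polynomial identity. The analytic input is
`√(R² - Q³)' = P·√(R² - Q³)`, which follows from `(R² - Q³)' = 2P(R² - Q³)` away from the zeros
of the square root and by the identity theorem at them.
-/

open Filter Topology

def RamanujanAt (P Q R : ℂ → ℂ) (x : ℂ) : Prop :=
  HasDerivAt P ((1/6) * ((P x)^2 - Q x)) x ∧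
  HasDerivAt Q ((2/3) * (P x * Q x - R x)) x ∧
  HasDerivAt R (P x * R x - (Q x)^2) x

theorem RamanujanAt.congr_of_eventuallyEq {P Q R P₁ Q₁ R₁ : ℂ → ℂ} {x : ℂ}
    (h : RamanujanAt P Q R x) (hP : P₁ =ᶠ[𝓝 x] P) (hQ : Q₁ =ᶠ[𝓝 x] Q) (hR : R₁ =ᶠ[𝓝 x] R) :
    RamanujanAt P₁ Q₁ R₁ x := by
  obtain ⟨h₁, h₂, h₃⟩ := h
  simp only [RamanujanAt, hP.eq_of_nhds, hQ.eq_of_nhds, hR.eq_of_nhds]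
  exact ⟨h₁.congr_of_eventuallyEq hP, h₂.congr_of_eventuallyEq hQ, h₃.congr_of_eventuallyEq hR⟩

theorem AnalyticAt.eventually_eq_zero_or_eq_zero_of_smul {𝕜 E : Type*} [NontriviallyNormedField 𝕜]
    [NormedAddCommGroup E] [NormedSpace 𝕜 E] {f : 𝕜 → 𝕜} {g : 𝕜 → E} {x : 𝕜}
    (hf : AnalyticAt 𝕜 f x) (hg : ContinuousAt g x) (hfg : ∀ᶠ z in 𝓝 x, f z • g z = 0) :
    (∀ᶠ z in 𝓝 x, f z = 0) ∨ g x = 0 := by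
  refine hf.eventually_eq_zero_or_eventually_ne_zero.imp id fun hne => ?_
  have hg0 : g =ᶠ[𝓝[≠] x] 0 := by
    filter_upwards [hne, nhdsWithin_le_nhds hfg] with z hz hz'
    exact (smul_eq_zero.mp hz').resolve_left hz
  exact tendsto_nhds_unique (hg.tendsto.mono_left nhdsWithin_le_nhds)
    (tendsto_const_nhds.congr' hg0.symm)

theorem hasDerivAt_of_pow_eq {s : Set ℂ} (hs : IsOpen s) {f a D : ℂ → ℂ} {n : ℕ} (hn : n ≠ 0)
    (hf : DifferentiableOn ℂ f s) (ha : ∀ z ∈ s, ContinuousAt a z)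
    (hD : ∀ z ∈ s, HasDerivAt D (n * a z * D z) z) (hfD : ∀ z ∈ s, f z ^ n = D z)
    {x : ℂ} (hx : x ∈ s) : HasDerivAt f (a x * f x) x := by
  obtain ⟨m, rfl⟩ : ∃ m, n = m + 1 := ⟨n - 1, by omega⟩
  have hf' : ∀ z ∈ s, HasDerivAt f (deriv f z) z := fun z hz =>
    (hf.differentiableAt (hs.mem_nhds hz)).hasDerivAt
  have hfactor : ∀ z ∈ s, f z ^ m * (deriv f z - a z * f z) = 0 := by
    intro z hz
    have hpow : (fun w => f w ^ (m + 1)) =ᶠ[𝓝 z] D := by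
      filter_upwards [hs.mem_nhds hz] with w hw using hfD w hw
    have h := ((hf' z hz).fun_pow (m + 1)).unique ((hD z hz).congr_of_eventuallyEq hpow)
    have : ((m + 1 : ℕ) : ℂ) * (f z ^ m * (deriv f z - a z * f z)) = 0 := by
      rw [← hfD z hz] at h
      simp only [Nat.add_sub_cancel] at h
      linear_combination h
    exact (mul_eq_zero.mp this).resolve_left (Nat.cast_ne_zero.mpr hn)
  have hcont : ContinuousAt (fun z => deriv f z - a z * f z) x :=
    ((hf.analyticOnNhd hs).deriv x hx).continuousAt.sub ((ha x hx).mul (hf' x hx).continuousAt)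
  rcases ((hf.analyticAt (hs.mem_nhds hx)).fun_pow m).eventually_eq_zero_or_eq_zero_of_smul hcont
    (eventually_of_mem (hs.mem_nhds hx) hfactor) with h0 | h0
  · have hf0 : f =ᶠ[𝓝 x] fun _ => 0 := h0.mono fun z hz => eq_zero_of_pow_eq_zero hz
    simpa [hf0.eq_of_nhds] using (hasDerivAt_const x (0 : ℂ)).congr_of_eventuallyEq hf0
  · exact sub_eq_zero.mp h0 ▸ hf' x hx

theorem hasDerivAt_of_pow_eventuallyEq {𝕜 : Type*} [NontriviallyNormedField 𝕜] [CharZero 𝕜]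
    {u T : 𝕜 → 𝕜} {T' x : 𝕜} {n : ℕ} (hn : n ≠ 0) (hu : DifferentiableAt 𝕜 u x) (hux : u x ≠ 0)
    (hT : HasDerivAt T T' x) (huT : (fun z => u z ^ n) =ᶠ[𝓝 x] T) :
    HasDerivAt u (T' / (n * u x ^ (n - 1))) x := by
  have h := (hu.hasDerivAt.fun_pow n).unique (hT.congr_of_eventuallyEq huT)
  rw [← h, mul_div_cancel_left₀ _ (mul_ne_zero (Nat.cast_ne_zero.mpr hn) (pow_ne_zero _ hux))]
  exact hu.hasDerivAt

theorem hasDerivAt_discriminant {P Q R : ℂ → ℂ} {x : ℂ}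
    (hQ : HasDerivAt Q ((2/3) * (P x * Q x - R x)) x) (hR : HasDerivAt R (P x * R x - (Q x)^2) x) :
    HasDerivAt (fun z => R z ^ 2 - Q z ^ 3) (2 * P x * (R x ^ 2 - Q x ^ 3)) x := by
  refine ((hR.fun_pow 2).sub (hQ.fun_pow 3)).congr_deriv ?_
  push_cast
  ring

theorem cube_add_div_cube_eq {K : Type*} [Field K] {q r d u : K} (hd : d ^ 2 = r ^ 2 - q ^ 3)
    (hu : u ^ 3 = r + d) (hu0 : u ≠ 0) : u ^ 3 + (q / u) ^ 3 = 2 * r := by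
  field_simp
  linear_combination (u ^ 3 - r + d) * hu + hd

theorem hasDerivAt_cubeRoot {P Q R Sq u : ℂ → ℂ} {x : ℂ}
    (hR : HasDerivAt R (P x * R x - Q x ^ 2) x) (hSq : HasDerivAt Sq (P x * Sq x) x)
    (hu : DifferentiableAt ℂ u x) (hux : u x ≠ 0) (huT : ∀ᶠ z in 𝓝 x, u z ^ 3 = R z + Sq z) :
    HasDerivAt u ((P x * u x - (Q x / u x) ^ 2) / 3) x := by
  refine (hasDerivAt_of_pow_eventuallyEq three_ne_zero hu hux (hR.add hSq) huT).congr_deriv ?_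
  norm_num
  field_simp
  linear_combination (-P x) * huT.self_of_nhds

theorem hasDerivAt_div_cubeRoot {P Q R u : ℂ → ℂ} {x : ℂ}
    (hQ : HasDerivAt Q ((2/3) * (P x * Q x - R x)) x)
    (hu : HasDerivAt u ((P x * u x - (Q x / u x) ^ 2) / 3) x) (hux : u x ≠ 0)
    (hR : u x ^ 3 + (Q x / u x) ^ 3 = 2 * R x) :
    HasDerivAt (fun z => Q z / u z) ((P x * (Q x / u x) - u x ^ 2) / 3) x := by
  refine (hQ.div hu hux).congr_deriv ?_
  field_simp at hR ⊢
  linear_combination hR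

theorem ramanujanAt_of_hasDerivAt_uv {P u v : ℂ → ℂ} {x : ℂ}
    (hP : HasDerivAt P ((P x ^ 2 - u x * v x) / 6) x)
    (hu : HasDerivAt u ((P x * u x - v x ^ 2) / 3) x)
    (hv : HasDerivAt v ((P x * v x - u x ^ 2) / 3) x) :
    RamanujanAt (fun z => P z + (u z + v z) / 2)
      (fun z => 3/2 * (u z * v z) + 5/4 * (u z ^ 2 + v z ^ 2))
      (fun z => 11/8 * (u z ^ 3 + v z ^ 3) + 21/8 * (u z * v z) * (u z + v z)) x := by
  refine ⟨(hP.add ((hu.add hv).div_const 2)).congr_deriv ?_,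
    (((hu.mul hv).const_mul (3/2)).add
      (((hu.fun_pow 2).add (hv.fun_pow 2)).const_mul (5/4))).congr_deriv ?_,
    ((((hu.fun_pow 3).add (hv.fun_pow 3)).const_mul (11/8)).add
      (((hu.mul hv).const_mul (21/8)).mul (hu.add hv))).congr_deriv ?_⟩ <;>
  · push_cast [Pi.add_apply, Pi.mul_apply]
    ring

/-- Given `(P, Q, R)` satisfying Ramanujan's differential equations, with a
holomorphic nonvanishing `T = R + √(R²-Q³)` and holomorphic cube root `T3`, the
triple `p₀ = P + (1/2)T3 + (1/2)Q/T3`, `q₀ = (3/2)Q + (5/4)T3² + (5/4)Q²/T3²`,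
`r₀ = (11/4)R + (21/8)Q·T3 + (21/8)Q²/T3` also satisfies Ramanujan's
differential equations. -/
theorem ramanujan_sum_automorphism (s : Set ℂ) (hs : IsOpen s)
    (P Q R Sq T3 p₀ q₀ r₀ : ℂ → ℂ)
    (hP : ∀ x ∈ s, HasDerivAt P ((1/6) * ((P x)^2 - Q x)) x)
    (hQ : ∀ x ∈ s, HasDerivAt Q ((2/3) * (P x * Q x - R x)) x)
    (hR : ∀ x ∈ s, HasDerivAt R (P x * R x - (Q x)^2) x)
    (hSq : DifferentiableOn ℂ Sq s)
    (hSq2 : ∀ x ∈ s, (Sq x)^2 = (R x)^2 - (Q x)^3)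
    (hT3 : DifferentiableOn ℂ T3 s)
    (hT3c : ∀ x ∈ s, (T3 x)^3 = R x + Sq x)
    (hTne : ∀ x ∈ s, R x + Sq x ≠ 0)
    (hp₀ : ∀ x, p₀ x = P x + (1/2) * T3 x + (1/2) * Q x / T3 x)
    (hq₀ : ∀ x, q₀ x = (3/2) * Q x + (5/4) * (T3 x)^2 + (5/4) * (Q x)^2 / (T3 x)^2)
    (hr₀ : ∀ x, r₀ x = (11/4) * R x + (21/8) * Q x * T3 x + (21/8) * (Q x)^2 / T3 x) :
    ∀ x ∈ s,
      HasDerivAt p₀ ((1/6) * ((p₀ x)^2 - q₀ x)) x ∧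
      HasDerivAt q₀ ((2/3) * (p₀ x * q₀ x - r₀ x)) x ∧
      HasDerivAt r₀ (p₀ x * r₀ x - (q₀ x)^2) x := by
  intro x hx
  have hT3ne : ∀ z ∈ s, T3 z ≠ 0 := fun z hz h0 =>
    hTne z hz (by rw [← hT3c z hz, h0, zero_pow three_ne_zero])
  have hSq' : ∀ z ∈ s, HasDerivAt Sq (P z * Sq z) z := fun z hz =>
    hasDerivAt_of_pow_eq hs two_ne_zero hSq (fun w hw => (hP w hw).continuousAt)
      (fun w hw => by exact_mod_cast hasDerivAt_discriminant (hQ w hw) (hR w hw)) hSq2 hz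
  have hsum : ∀ z ∈ s, T3 z ^ 3 + (Q z / T3 z) ^ 3 = 2 * R z := fun z hz =>
    cube_add_div_cube_eq (hSq2 z hz) (hT3c z hz) (hT3ne z hz)
  have hu := hasDerivAt_cubeRoot (hR x hx) (hSq' x hx) (hT3.differentiableAt (hs.mem_nhds hx))
    (hT3ne x hx) (eventually_of_mem (hs.mem_nhds hx) hT3c)
  have hv := hasDerivAt_div_cubeRoot (hQ x hx) hu (hT3ne x hx) (hsum x hx)
  have hP' : HasDerivAt P ((P x ^ 2 - T3 x * (Q x / T3 x)) / 6) x := by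
    refine (hP x hx).congr_deriv ?_
    rw [mul_div_cancel₀ _ (hT3ne x hx)]
    ring
  refine (ramanujanAt_of_hasDerivAt_uv (v := fun z => Q z / T3 z) hP' hu hv).congr_of_eventuallyEq
    (.of_forall fun z => by rw [hp₀]; ring) ?_ ?_
  · filter_upwards [hs.mem_nhds hx] with z hz
    rw [hq₀, mul_div_cancel₀ _ (hT3ne z hz)]
    ring
  · filter_upwards [hs.mem_nhds hx] with z hz
    rw [hr₀, hsum z hz, mul_div_cancel₀ _ (hT3ne z hz)]
    ring
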